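/- arXiv:1402.3702 — 2 statements merged into one kernel-verified Lean document; each statement's English description precedes it below -/
import Mathlib

section
/- Let S = CS(5) be the commutative semigroup of order 3 with multiplication e_1 x = x e_1 = e_1 for all x, and e_2 e_2 = e_2 e_3 = e_3 e_2 = e_3 e_3 = e_2. A k-linear operator P on k[S] is a Rota-Baxter operator of weight zero if and only if its matrix C_P equals [[0, a, -a], [0, b, -b], [0, c, -c]] for some a, b, c in k. -/
/-!
In the basis `f₁ = e₁`, `f₂ = e₂ - e₁`, `f₃ = e₃ - e₂` of `k[S]`, each `fᵢ` satisfies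
`fᵢ * x = φᵢ(x) • fᵢ` for a character `φᵢ`: the augmentation, the character `s ↦ [s ≠ e₁]`,
and `0`. For any `e` with `e * x = x * e = φ(x) • e`, the Rota–Baxter identity at `(e, e)` reads
`P e * P e = 2 φ(P e) • P e`; applying `φ` forces `φ(P e) = 0`, so `P e` squares to zero and every character kills it.
Hence both nonzero characters vanish on the range of `P`, i.e. `P` takes values in `k f₃`, which is
the stated shape of `C_P`. Conversely `f₃` annihilates `k[S]`, so if `P` takes values in `k f₃`
all three terms of the Rota–Baxter identity vanish.
-/

namespace Stmt9

inductive S : Type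
  | e1 | e2 | e3
  deriving DecidableEq

open S

instance : Fintype S := ⟨{e1, e2, e3}, fun x => by cases x <;> simp⟩

/-- Multiplication table of the semigroup. -/
instance : Mul S := ⟨fun a b => match a, b with
  | e1, e1 => e1
  | e1, e2 => e1
  | e1, e3 => e1
  | e2, e1 => e1
  | e2, e2 => e2
  | e2, e3 => e2
  | e3, e1 => e1
  | e3, e2 => e2
  | e3, e3 => e2⟩

instance : Semigroup S := { mul_assoc := by decide }

/-- The 3×3 matrix (rows = first index) as a function `S → S → k`. -/
def mat3 {k : Type*} (a11 a12 a13 a21 a22 a23 a31 a32 a33 : k) : S → S → k :=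
  fun i j => match i, j with
  | e1, e1 => a11 | e1, e2 => a12 | e1, e3 => a13
  | e2, e1 => a21 | e2, e2 => a22 | e2, e3 => a23
  | e3, e1 => a31 | e3, e2 => a32 | e3, e3 => a33

end Stmt9

open MonoidAlgebra

def IsRotaBaxter {k A : Type*} [Semiring k] [NonUnitalNonAssocSemiring A] [Module k A]
    (P : A →ₗ[k] A) : Prop :=
  ∀ x y, P x * P y = P (x * P y) + P (P x * y)

section

variable {k A : Type*} [NonUnitalNonAssocSemiring A]

theorem isRotaBaxter_of_mul_eq_zero [Semiring k] [Module k A] {P : A →ₗ[k] A}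
    (hl : ∀ x y, P x * y = 0) (hr : ∀ x y, y * P x = 0) : IsRotaBaxter P := by
  intro x y
  simp only [hl, hr, map_zero, add_zero]

theorem IsRotaBaxter.apply_mul_self_eq_zero [Ring k] [NoZeroDivisors k] [Module k A]
    {P : A →ₗ[k] A} (hP : IsRotaBaxter P) (φ : A →ₙₐ[k] k) {e : A}
    (hl : ∀ x, e * x = φ x • e) (hr : ∀ x, x * e = φ x • e) : P e * P e = 0 := by
  have hsq : P e * P e = φ (P e) • P e + φ (P e) • P e := by
    rw [hP, hl, hr, map_smul]
  have hφ : φ (P e) = 0 := by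
    have := congrArg φ hsq
    rw [map_mul, map_add, map_smul, smul_eq_mul, left_eq_add] at this
    exact _root_.mul_self_eq_zero.mp this
  rw [hsq, hφ, zero_smul, add_zero]

theorem MonoidAlgebra.mul_eq_smul_of_forall_mul_single [CommSemiring k] {M : Type*} [Mul M]
    {e : k[M]} (φ : k[M] →ₙₐ[k] k) (h : ∀ m, e * single m 1 = φ (single m 1) • e)
    (x : k[M]) : e * x = φ x • e := by
  induction x using MonoidAlgebra.induction_linear with
  | zero => simp
  | add x y hx hy => rw [mul_add, hx, hy, map_add, add_smul]
  | single m r =>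
    have hr : single m r = r • single m (1 : k) := by rw [smul_single', mul_one]
    rw [hr, mul_smul_comm, h, map_smul, smul_smul]
    simp

end

namespace Stmt9

open S

instance : CommSemigroup S := { mul_comm := by decide }

@[simp] theorem e1_mul (s : S) : e1 * s = e1 := by cases s <;> rfl

@[simp] theorem mul_e1 (s : S) : s * e1 = e1 := by cases s <;> rfl

@[simp] theorem mul_eq_e2 {s t : S} (hs : s ≠ e1) (ht : t ≠ e1) : s * t = e2 := by
  cases s <;> cases t <;> first | rfl | contradiction

theorem sum_univ_S {M : Type*} [AddCommMonoid M] (f : S → M) :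
    ∑ s, f s = f e1 + f e2 + f e3 := by
  simp [Finset.univ, Fintype.elems, add_assoc]

section CS5

variable (k : Type*) [CommRing k]

noncomputable def augmentation : k[S] →ₙₐ[k] k :=
  liftMagma k ⟨fun _ => 1, fun _ _ => (mul_one 1).symm⟩

noncomputable def nonzeroPart : k[S] →ₙₐ[k] k := liftMagma k
  { toFun s := if s = e1 then 0 else 1
    map_mul' a b := by cases a <;> cases b <;> simp }

noncomputable def f₂ : k[S] := single e2 1 - single e1 1

noncomputable def f₃ : k[S] := single e3 1 - single e2 1

variable {k}

theorem single_e1_mul (x : k[S]) : single e1 1 * x = augmentation k x • single e1 1 :=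
  mul_eq_smul_of_forall_mul_single _ (by
    rintro (_ | _ | _) <;> simp [single_mul_single, augmentation]) x

theorem f₂_mul (x : k[S]) : f₂ k * x = nonzeroPart k x • f₂ k :=
  mul_eq_smul_of_forall_mul_single _ (by
    rintro (_ | _ | _) <;> simp [f₂, sub_mul, single_mul_single, nonzeroPart]) x

theorem f₃_mul (x : k[S]) : f₃ k * x = 0 := by
  simpa using mul_eq_smul_of_forall_mul_single 0 (by
    rintro (_ | _ | _) <;> simp [f₃, sub_mul, single_mul_single]) x

theorem map_apply_single_eq_zero_of_isRotaBaxter [NoZeroDivisors k] {P : k[S] →ₗ[k] k[S]}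
    (hP : IsRotaBaxter P) (φ : k[S] →ₙₐ[k] k) (i : S) : φ (P (single i 1)) = 0 := by
  have hφ {e : k[S]} (he : P e * P e = 0) : φ (P e) = 0 :=
    mul_self_eq_zero.mp (by rw [← map_mul, he, map_zero])
  have h₁ := hφ <| hP.apply_mul_self_eq_zero _ single_e1_mul
    fun x => by rw [mul_comm, single_e1_mul]
  have h₂ := hφ <| hP.apply_mul_self_eq_zero _ f₂_mul fun x => by rw [mul_comm, f₂_mul]
  have h₃ := hφ <| hP.apply_mul_self_eq_zero (e := f₃ k) 0 (fun x => by simp [f₃_mul])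
    fun x => by simp [mul_comm x, f₃_mul]
  cases i with
  | e1 => exact h₁
  | e2 => rw [show single e2 1 = single e1 1 + f₂ k by simp [f₂], map_add, map_add, h₁, h₂,
      add_zero]
  | e3 => rw [show single e3 1 = single e1 1 + f₂ k + f₃ k by simp [f₂, f₃], map_add, map_add,
      map_add, map_add, h₁, h₂, h₃, add_zero, add_zero]

theorem augmentation_apply_sum_single (c : S → k) :
    augmentation k (∑ j, single j (c j)) = c e1 + c e2 + c e3 := by
  simp [sum_univ_S, augmentation]

theorem nonzeroPart_apply_sum_single (c : S → k) :
    nonzeroPart k (∑ j, single j (c j)) = c e2 + c e3 := by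
  simp [sum_univ_S, nonzeroPart]

theorem exists_eq_mat3_of_isRotaBaxter [NoZeroDivisors k] {P : k[S] →ₗ[k] k[S]}
    {C : S → S → k} (hC : ∀ i, P (single i 1) = ∑ j, single j (C i j)) (hP : IsRotaBaxter P) :
    ∃ a b c : k, C = mat3 0 a (-a) 0 b (-b) 0 c (-c) := by
  have hψ (i : S) : C i e2 + C i e3 = 0 := by
    rw [← nonzeroPart_apply_sum_single, ← hC, map_apply_single_eq_zero_of_isRotaBaxter hP]
  have hε (i : S) : C i e1 = 0 := by
    have := map_apply_single_eq_zero_of_isRotaBaxter hP (augmentation k) i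
    rwa [hC, augmentation_apply_sum_single, add_assoc, hψ, add_zero] at this
  refine ⟨C e1 e2, C e2 e2, C e3 e2, funext fun i => funext fun j => ?_⟩
  have he3 : C i e3 = -C i e2 := eq_neg_of_add_eq_zero_right (hψ i)
  cases i <;> cases j <;> simp only [mat3, hε, he3]

theorem isRotaBaxter_of_eq_mat3 {P : k[S] →ₗ[k] k[S]} {C : S → S → k}
    (hC : ∀ i, P (single i 1) = ∑ j, single j (C i j)) {a b c : k}
    (h : C = mat3 0 a (-a) 0 b (-b) 0 c (-c)) : IsRotaBaxter P := by
  have hbasis (i : S) : P (single i 1) = -C i e2 • f₃ k := by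
    subst h
    cases i <;> simp [hC, sum_univ_S, mat3, f₃, smul_sub] <;> abel
  have hrange (x : k[S]) : P x ∈ k ∙ f₃ k := by
    induction x using MonoidAlgebra.induction_linear with
    | zero => simp
    | add x y hx hy => rw [map_add]; exact add_mem hx hy
    | single i r =>
      rw [show single i r = r • single i (1 : k) by rw [smul_single', mul_one], map_smul, hbasis]
      exact Submodule.smul_mem _ _ (Submodule.smul_mem _ _ (Submodule.mem_span_singleton_self _))
  have hmul (x y : k[S]) : P x * y = 0 := by
    obtain ⟨t, ht⟩ := Submodule.mem_span_singleton.mp (hrange x)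
    rw [← ht, smul_mul_assoc, f₃_mul, smul_zero]
  exact isRotaBaxter_of_mul_eq_zero hmul fun x y => by rw [mul_comm, hmul]

end CS5

theorem rbo_CS5_general {k : Type*} [Field k]
    (P : MonoidAlgebra k S →ₗ[k] MonoidAlgebra k S) (C : S → S → k)
    (hC : ∀ i, P (MonoidAlgebra.single i 1) = ∑ j, MonoidAlgebra.single j (C i j)) :
    (∀ x y, P x * P y = P (x * P y) + P (P x * y)) ↔
      (∃ a b c : k, C = mat3 0 a (-a) 0 b (-b) 0 c (-c)) :=
  ⟨exists_eq_mat3_of_isRotaBaxter hC, fun ⟨_, _, _, h⟩ => isRotaBaxter_of_eq_mat3 hC h⟩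

theorem rbo_CS5 {k : Type*} [Field k] [CharZero k]
    (P : MonoidAlgebra k S →ₗ[k] MonoidAlgebra k S) (C : S → S → k)
    (hC : ∀ i, P (MonoidAlgebra.single i 1) = ∑ j, MonoidAlgebra.single j (C i j)) :
    (∀ x y, P x * P y = P (x * P y) + P (P x * y)) ↔
      (∃ a b c : k, C = mat3 0 a (-a) 0 b (-b) 0 c (-c)) :=
  rbo_CS5_general P C hC

end Stmt9
end

section
/- Let S = NCS(4) be the noncommutative semigroup of order 3 with Cayley table (rows indexed by the left factor): e_1 e_j = e_1 for all j; e_2 e_j = e_2 for all j; e_3 e_j = e_1 for all j. A k-linear operator P on k[S] is a Rota-Baxter operator of weight zero if and only if its matrix C_P belongs to one of the following families (parameters in k): (1) [[-a,0,a],[b,0,-b],[c,0,-c]] with a nonzero, a+b nonzero, and b, c arbitrary; (2) [[-a,0,a],[-a,0,a],[c,d,-c-d]] with a nonzero and c, d arbitrary; (3) [[0,0,0],[-a,0,a],[b,0,-b]] with a nonzero and b arbitrary; (4) [[0,0,0],[0,0,0],[b,c,-(b+c)]] with c nonzero and b arbitrary; (5) [[0,0,0],[a,0,0],[b,0,-b]]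 with a, b arbitrary; (6) [[a,-(a+b),b],[a,-(a+b),b],[c,d,-(c+d)]] with b nonzero, a+b nonzero, and c, d arbitrary; (7) [[a,b,0],[-a^2/b,-a,0],[c,b,a-c]] with b nonzero, a+b nonzero, and c arbitrary; (8) [[-b,b,0],[-b,b,0],[c,d,-c-d]] with b nonzero and c, d arbitrary. -/
/-!
In NCS(4) the product ignores its right factor: `p * q = g p` with `g = (· * e1)`. Hence
`x * y = ε(y) • G x` in `k[S]`, where `ε` is the augmentation and `G` is `e_p ↦ e_{g p}`, and the
Rota–Baxter identity becomes the matrix identity `s_j • (C Φ - Φ C) = C Φ C` for every row sum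
`s_j` of `C`, with `Φ` the matrix of `G`. If `C` does not commute with `Φ`, all row sums are equal
to some `c`, and applying both sides to the all-ones vector gives `c² = 0`. So `P` is Rota–Baxter
iff `C Φ C = 0` and either the rows of `C` sum to zero or `C` commutes with `Φ`; solving these
polynomial equations in the nine entries gives the eight families.
-/

namespace Stmt17

inductive S : Type
  | e1 | e2 | e3
  deriving DecidableEq

instance instFintypeS : Fintype S :=
  ⟨{S.e1, S.e2, S.e3}, fun x => by cases x <;> simp⟩

open S

/-- Multiplication table of the semigroup. -/
instance : Mul S := ⟨fun a b => match a, b with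
  | e1, e1 => e1
  | e1, e2 => e1
  | e1, e3 => e1
  | e2, e1 => e2
  | e2, e2 => e2
  | e2, e3 => e2
  | e3, e1 => e1
  | e3, e2 => e1
  | e3, e3 => e1⟩

instance : Semigroup S := { mul_assoc := by decide }

/-- The 3×3 matrix (rows = first index) as a function `S → S → k`. -/
def mat3 {k : Type*} (a11 a12 a13 a21 a22 a23 a31 a32 a33 : k) : S → S → k :=
  fun i j => match i, j with
  | e1, e1 => a11 | e1, e2 => a12 | e1, e3 => a13
  | e2, e1 => a21 | e2, e2 => a22 | e2, e3 => a23
  | e3, e1 => a31 | e3, e2 => a32 | e3, e3 => a33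

end Stmt17

open scoped Matrix

/-- The matrix of `e_p ↦ e_{g p}`, in the convention where row `p` holds the image of `e_p`. -/
def funMatrix {k T : Type*} [Zero k] [One k] [DecidableEq T] (g : T → T) : Matrix T T k :=
  Matrix.of fun p r => if g p = r then 1 else 0

section FunMatrix

variable {k T : Type*} [NonAssocSemiring k] [Fintype T] [DecidableEq T]

lemma funMatrix_mulVec_one (g : T → T) : funMatrix g *ᵥ (1 : T → k) = 1 := by
  ext p
  simp [funMatrix, Matrix.mulVec, dotProduct]

lemma funMatrix_mul_apply (g : T → T) (M : Matrix T T k) (i r : T) :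
    ((funMatrix g : Matrix T T k) * M) i r = M (g i) r := by
  simp [funMatrix, Matrix.mul_apply]

end FunMatrix

namespace MonoidAlgebra

theorem rotaBaxter_iff_single {k G : Type*} [CommSemiring k] [Mul G]
    (P : MonoidAlgebra k G →ₗ[k] MonoidAlgebra k G) :
    (∀ x y, P x * P y = P (x * P y) + P (P x * y)) ↔
      ∀ i j, P (single i 1) * P (single j 1) =
        P (single i 1 * P (single j 1)) + P (P (single i 1) * single j 1) := by
  refine ⟨fun h i j => h _ _, fun h x y => ?_⟩
  let μ := LinearMap.mul k (MonoidAlgebra k G)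
  have : μ.compl₁₂ P P = (μ.compl₂ P).compr₂ P + (μ.comp P).compr₂ P :=
    LinearMap.ext_basis (basis G k) (basis G k) fun i j => by simpa [μ] using h i j
  simpa [μ] using LinearMap.congr_fun₂ this x y

lemma single_sum {k G ι : Type*} [Semiring k] (r : G) (s : Finset ι) (f : ι → k) :
    single r (∑ i ∈ s, f i) = ∑ i ∈ s, single r (f i) :=
  map_sum (singleAddHom r) f s

section FiniteBasis

variable {k T : Type*} [CommSemiring k] [Fintype T]

lemma sum_single_inj {v w : T → k} :
    (∑ r, single r (v r) : MonoidAlgebra k T) = ∑ r, single r (w r) ↔ v = w := by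
  classical
  refine ⟨fun h => funext fun r => ?_, fun h => h ▸ rfl⟩
  simpa [Finsupp.single_apply] using congr(($h).coeff r)

lemma sum_single_add (v w : T → k) :
    (∑ r, single r (v r) : MonoidAlgebra k T) + ∑ r, single r (w r) =
      ∑ r, single r ((v + w) r) := by
  simp [← Finset.sum_add_distrib, MonoidAlgebra.single_add]

lemma map_sum_single {P : MonoidAlgebra k T →ₗ[k] MonoidAlgebra k T} {C : Matrix T T k}
    (hC : ∀ i, P (single i 1) = ∑ j, single j (C i j)) (v : T → k) :
    P (∑ p, single p (v p)) = ∑ r, single r ((v ᵥ* C) r) := by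
  have hv (p : T) : single p (v p) = v p • (single p 1 : MonoidAlgebra k T) := by
    rw [smul_single, smul_eq_mul, mul_one]
  simp_rw [hv, map_sum, map_smul, hC, Finset.smul_sum, smul_single, smul_eq_mul]
  rw [Finset.sum_comm]
  simp [Matrix.vecMul, dotProduct, single_sum]

variable [DecidableEq T]

lemma single_one_eq_sum (i : T) :
    (single i 1 : MonoidAlgebra k T) = ∑ r, single r (Pi.single i 1 r) := by
  rw [Finset.sum_eq_single i (fun r _ hr => by simp [hr]) (by simp), Pi.single_eq_same]

lemma sum_single_comp (g : T → T) (v : T → k) :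
    ∑ p, (single (g p) (v p) : MonoidAlgebra k T) = ∑ r, single r ((v ᵥ* funMatrix g) r) := by
  simp_rw [Matrix.vecMul, dotProduct, funMatrix, Matrix.of_apply, mul_ite, mul_one, mul_zero,
    single_sum]
  rw [Finset.sum_comm]
  refine Finset.sum_congr rfl fun p _ => ?_
  rw [Finset.sum_eq_single (g p) (fun r _ hr => by simp [Ne.symm hr]) (by simp), if_pos rfl]

variable [Mul T] {g : T → T}

lemma sum_single_mul_sum_single (hg : ∀ p q, p * q = g p) (v w : T → k) :
    (∑ p, single p (v p) : MonoidAlgebra k T) * ∑ q, single q (w q) =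
      ∑ r, single r (((∑ q, w q) • (v ᵥ* funMatrix g)) r) := by
  rw [← Matrix.smul_vecMul, ← sum_single_comp, Finset.sum_mul_sum]
  simp_rw [single_mul_single, hg, ← single_sum, ← Finset.mul_sum, Pi.smul_apply, smul_eq_mul,
    mul_comm]

theorem rotaBaxter_iff_matrix (hg : ∀ p q, p * q = g p)
    {P : MonoidAlgebra k T →ₗ[k] MonoidAlgebra k T} {C : Matrix T T k}
    (hC : ∀ i, P (single i 1) = ∑ j, single j (C i j)) :
    (∀ x y, P x * P y = P (x * P y) + P (P x * y)) ↔
      ∀ j, (C *ᵥ 1) j • (C * funMatrix g) =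
        (C *ᵥ 1) j • (funMatrix g * C) + C * funMatrix g * C := by
  rw [rotaBaxter_iff_single]
  simp only [hC]
  simp only [single_one_eq_sum (k := k), sum_single_mul_sum_single hg, map_sum_single hC,
    sum_single_add, sum_single_inj]
  rw [forall_comm]
  refine forall_congr' fun j => ?_
  refine (forall_congr' fun i => ?_).trans (funext_iff (β := fun _ => T → k)).symm
  simp only [Matrix.single_vecMul, one_smul, Matrix.smul_vecMul, Finset.sum_pi_single',
    Finset.mem_univ, ↓reduceIte, Matrix.vecMul_vecMul, Matrix.mulVec, dotProduct, Pi.one_apply,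
    mul_one, Matrix.mul_assoc]
  rfl

end FiniteBasis

end MonoidAlgebra

open MonoidAlgebra

theorem forall_rowSum_smul_iff {k T : Type*} [Field k] [Fintype T] {Φ C : Matrix T T k}
    (hΦ : Φ *ᵥ 1 = 1) :
    (∀ j, (C *ᵥ 1) j • (C * Φ) = (C *ᵥ 1) j • (Φ * C) + C * Φ * C) ↔
      C * Φ * C = 0 ∧ (C *ᵥ 1 = 0 ∨ C * Φ = Φ * C) := by
  refine ⟨fun h => ?_, ?_⟩
  · by_cases hcomm : C * Φ = Φ * C
    · refine ⟨?_, .inr hcomm⟩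
      ext i r
      have hi := h i
      rw [hcomm, left_eq_add] at hi
      rw [hcomm, hi]
    obtain ⟨i, r, hir⟩ : ∃ i r, (C * Φ) i r ≠ (Φ * C) i r := by
      by_contra! H
      exact hcomm (Matrix.ext H)
    set c := (C *ᵥ 1) i
    have hsum : C *ᵥ 1 = c • 1 := by
      ext j
      have hj := congr_fun₂ (h j) i r
      have hi := congr_fun₂ (h i) i r
      simp only [Matrix.add_apply, Matrix.smul_apply, smul_eq_mul] at hj hi
      simpa using mul_right_cancel₀ (sub_ne_zero.2 hir) (by linear_combination hj - hi)
    have hc : c = 0 := by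
      have hi := congr_fun (congr_arg (· *ᵥ (1 : T → k)) (h i)) i
      simp only [Matrix.add_mulVec, Matrix.smul_mulVec, Matrix.mulVec_smul, ← Matrix.mulVec_mulVec,
        hΦ, hsum] at hi
      simpa using hi
    refine ⟨?_, .inl (by simp [hsum, hc])⟩
    simpa [hsum, hc] using (h i).symm
  · rintro ⟨h0, hsum | hcomm⟩ j
    · simp [hsum, h0]
    · rw [h0, add_zero, hcomm]

namespace Stmt17

open S

lemma sum_S {M : Type*} [AddCommMonoid M] (f : S → M) : ∑ j, f j = f e1 + f e2 + f e3 := by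
  simp [Finset.univ, Fintype.elems, add_assoc]

lemma forall_S {p : S → Prop} : (∀ s, p s) ↔ p e1 ∧ p e2 ∧ p e3 :=
  ⟨fun h => ⟨h e1, h e2, h e3⟩, fun ⟨h1, h2, h3⟩ s => by cases s <;> assumption⟩

@[simp] lemma e1_mul (p : S) : e1 * p = e1 := by cases p <;> rfl
@[simp] lemma e2_mul (p : S) : e2 * p = e2 := by cases p <;> rfl
@[simp] lemma e3_mul (p : S) : e3 * p = e1 := by cases p <;> rfl

lemma mul_eq_mul_e1 (p q : S) : p * q = p * e1 := by cases p <;> simp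

lemma eq_mat3 {k : Type*} (C : S → S → k) :
    C = mat3 (C e1 e1) (C e1 e2) (C e1 e3) (C e2 e1) (C e2 e2) (C e2 e3)
      (C e3 e1) (C e3 e2) (C e3 e3) := by
  funext i j
  cases i <;> cases j <;> rfl

section Entries

variable {k : Type*} [CommRing k]

lemma mulVec_one_apply (C : Matrix S S k) (i : S) : (C *ᵥ 1) i = C i e1 + C i e2 + C i e3 := by
  simp [Matrix.mulVec, dotProduct, sum_S]

lemma mul_funMatrix_mul_apply (C : Matrix S S k) (i r : S) :
    (C * (funMatrix (· * e1) : Matrix S S k) * C) i r =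
      (C i e1 + C i e3) * C e1 r + C i e2 * C e2 r := by
  rw [Matrix.mul_assoc, Matrix.mul_apply, sum_S]
  simp only [funMatrix_mul_apply, e1_mul, e2_mul, e3_mul]
  ring

lemma mul_funMatrix_comm_iff (C : Matrix S S k) :
    C * funMatrix (· * e1) = funMatrix (· * e1) * C ↔
      C e1 e3 = 0 ∧ C e2 e3 = 0 ∧ C e3 e1 + C e3 e3 = C e1 e1 ∧ C e3 e2 = C e1 e2 := by
  simp only [funMatrix, ← Matrix.ext_iff, Matrix.mul_apply, Matrix.of_apply, mul_ite, mul_one,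
    mul_zero, sum_S, e1_mul, e2_mul, e3_mul, ite_mul, one_mul, zero_mul, Finset.sum_ite_eq,
    Finset.mem_univ, ↓reduceIte, forall_S, reduceCtorEq, add_zero, zero_add, add_eq_left, true_and]
  tauto

end Entries

section Classification

variable {k : Type*} [Field k]

def InRotaBaxterFamilies (C : S → S → k) : Prop :=
  (∃ a b c : k, a ≠ 0 ∧ a + b ≠ 0 ∧ C = mat3 (-a) 0 a b 0 (-b) c 0 (-c)) ∨
  (∃ a c d : k, a ≠ 0 ∧ C = mat3 (-a) 0 a (-a) 0 a c d (-c - d)) ∨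
  (∃ a b : k, a ≠ 0 ∧ C = mat3 0 0 0 (-a) 0 a b 0 (-b)) ∨
  (∃ b c : k, c ≠ 0 ∧ C = mat3 0 0 0 0 0 0 b c (-(b + c))) ∨
  (∃ a b : k, C = mat3 0 0 0 a 0 0 b 0 (-b)) ∨
  (∃ a b c d : k, b ≠ 0 ∧ a + b ≠ 0 ∧ C = mat3 a (-(a + b)) b a (-(a + b)) b c d (-(c + d))) ∨
  (∃ a b c : k, b ≠ 0 ∧ a + b ≠ 0 ∧ C = mat3 a b 0 (-(a ^ 2) / b) (-a) 0 c b (a - c)) ∨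
  (∃ b c d : k, b ≠ 0 ∧ C = mat3 (-b) b 0 (-b) b 0 c d (-c - d))

section Families

variable {x1 x2 x3 y1 y2 y3 z1 z2 z3 : k}

lemma families_of_commute (hx3 : x3 = 0) (hy3 : y3 = 0) (hz : z1 + z3 = x1) (hz2 : z2 = x2)
    (h11 : x1 * x1 + x2 * y1 = 0) (h12 : x1 * x2 + x2 * y2 = 0) (h22 : y1 * x2 + y2 * y2 = 0) :
    InRotaBaxterFamilies (mat3 x1 x2 x3 y1 y2 y3 z1 z2 z3) := by
  obtain rfl : z3 = x1 - z1 := by linear_combination hz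
  subst x3 y3 z2
  by_cases hx2 : x2 = 0
  · subst hx2
    obtain rfl : x1 = 0 := mul_self_eq_zero.1 (by linear_combination h11)
    obtain rfl : y2 = 0 := mul_self_eq_zero.1 (by linear_combination h22)
    exact .inr <| .inr <| .inr <| .inr <| .inl ⟨y1, z1, by simp⟩
  obtain rfl : y2 = -x1 := mul_left_cancel₀ hx2 (by linear_combination h12)
  by_cases hsum : x1 + x2 = 0
  · obtain rfl : x1 = -x2 := by linear_combination hsum
    obtain rfl : y1 = -x2 := mul_left_cancel₀ hx2 (by linear_combination h11)
    refine .inr <| .inr <| .inr <| .inr <| .inr <| .inr <| .inr ⟨x2, z1, x2, hx2, ?_⟩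
    congr 1 <;> ring
  · obtain rfl : y1 = -(x1 ^ 2) / x2 := by field_simp; linear_combination h11
    exact .inr <| .inr <| .inr <| .inr <| .inr <| .inr <| .inl ⟨x1, x2, z1, hx2, hsum, rfl⟩

lemma families_of_rowSum_eq_zero (hx : x1 + x2 + x3 = 0) (hy : y1 + y2 + y3 = 0)
    (hz : z1 + z2 + z3 = 0) (h : (x2 = 0 ∧ y2 = 0 ∧ z2 = 0) ∨ (x1 = y1 ∧ x2 = y2)) :
    InRotaBaxterFamilies (mat3 x1 x2 x3 y1 y2 y3 z1 z2 z3) := by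
  obtain rfl : x3 = -(x1 + x2) := by linear_combination hx
  obtain rfl : y3 = -(y1 + y2) := by linear_combination hy
  obtain rfl : z3 = -(z1 + z2) := by linear_combination hz
  rcases h with ⟨rfl, rfl, rfl⟩ | ⟨rfl, rfl⟩
  · by_cases hx1 : x1 = 0
    · subst hx1
      by_cases hy1 : y1 = 0
      · subst hy1
        exact .inr <| .inr <| .inr <| .inr <| .inl ⟨0, z1, by simp⟩
      · refine .inr <| .inr <| .inl ⟨-y1, z1, neg_ne_zero.2 hy1, ?_⟩
        congr 1 <;> ring
    · by_cases hxy : x1 = y1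
      · subst hxy
        refine .inr <| .inl ⟨-x1, z1, 0, neg_ne_zero.2 hx1, ?_⟩
        congr 1 <;> ring
      · refine .inl ⟨-x1, y1, z1, neg_ne_zero.2 hx1, ?_, ?_⟩
        · rwa [neg_add_eq_sub, sub_ne_zero, ne_comm]
        · congr 1 <;> ring
  · by_cases hx2 : x2 = 0
    · subst hx2
      by_cases hx1 : x1 = 0
      · subst hx1
        by_cases hz2 : z2 = 0
        · subst hz2
          exact .inr <| .inr <| .inr <| .inr <| .inl ⟨0, z1, by simp⟩
        · exact .inr <| .inr <| .inr <| .inl ⟨z1, z2, hz2, by simp⟩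
      · refine .inr <| .inl ⟨-x1, z1, z2, neg_ne_zero.2 hx1, ?_⟩
        congr 1 <;> ring
    · by_cases hx3 : x1 + x2 = 0
      · obtain rfl : x1 = -x2 := by linear_combination hx3
        refine .inr <| .inr <| .inr <| .inr <| .inr <| .inr <| .inr ⟨x2, z1, z2, hx2, ?_⟩
        congr 1 <;> ring
      · refine .inr <| .inr <| .inr <| .inr <| .inr <| .inl
          ⟨x1, -(x1 + x2), z1, z2, neg_ne_zero.2 hx3, by simpa using hx2, ?_⟩
        congr 1 <;> ring

end Families

lemma col_eq_zero_or_row_eq {C : Matrix S S k} (hs : C *ᵥ 1 = 0)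
    (h0 : C * funMatrix (· * e1) * C = 0) :
    (C e1 e2 = 0 ∧ C e2 e2 = 0 ∧ C e3 e2 = 0) ∨ (C e1 e1 = C e2 e1 ∧ C e1 e2 = C e2 e2) := by
  have key (i r : S) : C i e2 * (C e2 r - C e1 r) = 0 := by
    have hi : C i e1 + C i e2 + C i e3 = 0 := by simpa [mulVec_one_apply] using congr_fun hs i
    have hir : (C i e1 + C i e3) * C e1 r + C i e2 * C e2 r = 0 := by
      simpa [mul_funMatrix_mul_apply] using congr_fun₂ h0 i r
    linear_combination hir - C e1 r * hi
  by_cases hrow : C e1 e1 = C e2 e1 ∧ C e1 e2 = C e2 e2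
  · exact .inr hrow
  obtain ⟨r, hr⟩ : ∃ r, C e2 r - C e1 r ≠ 0 := by
    rw [not_and_or] at hrow
    rcases hrow with h | h
    exacts [⟨e1, sub_ne_zero.2 (Ne.symm h)⟩, ⟨e2, sub_ne_zero.2 (Ne.symm h)⟩]
  exact .inl ⟨(mul_eq_zero.1 (key e1 r)).resolve_right hr,
    (mul_eq_zero.1 (key e2 r)).resolve_right hr, (mul_eq_zero.1 (key e3 r)).resolve_right hr⟩

theorem inRotaBaxterFamilies_iff (C : Matrix S S k) :
    InRotaBaxterFamilies C ↔ C * funMatrix (· * e1) * C = 0 ∧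
      (C *ᵥ 1 = 0 ∨ C * funMatrix (· * e1) = funMatrix (· * e1) * C) := by
  constructor
  · intro hC
    rw [mul_funMatrix_comm_iff]
    simp only [← Matrix.ext_iff, mul_funMatrix_mul_apply, Matrix.zero_apply, funext_iff,
      mulVec_one_apply, Pi.zero_apply, forall_S]
    rcases hC with ⟨a, b, c, -, -, rfl⟩ | ⟨a, c, d, -, rfl⟩ | ⟨a, b, -, rfl⟩ | ⟨b, c, -, rfl⟩ |
      ⟨a, b, rfl⟩ | ⟨a, b, c, d, -, -, rfl⟩ | ⟨a, b, c, hb, -, rfl⟩ | ⟨b, c, d, -, rfl⟩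
    all_goals simp only [mat3]; ring_nf; simp_all
  rintro ⟨h0, hs | hcomm⟩ <;> rw [eq_mat3 C]
  · have hrow (i : S) := (mulVec_one_apply C i).symm.trans (congr_fun hs i)
    exact families_of_rowSum_eq_zero (hrow e1) (hrow e2) (hrow e3) (col_eq_zero_or_row_eq hs h0)
  · obtain ⟨hx3, hy3, hz, hz2⟩ := (mul_funMatrix_comm_iff C).1 hcomm
    have h (i r : S) := (mul_funMatrix_mul_apply C i r).symm.trans (congr_fun₂ h0 i r)
    refine families_of_commute hx3 hy3 hz hz2 ?_ ?_ ?_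
    · simpa [hx3] using h e1 e1
    · simpa [hx3] using h e1 e2
    · simpa [hy3] using h e2 e2

end Classification

theorem rbo_NCS4_general {k : Type*} [Field k]
    (P : MonoidAlgebra k S →ₗ[k] MonoidAlgebra k S) (C : S → S → k)
    (hC : ∀ i, P (MonoidAlgebra.single i 1) = ∑ j, MonoidAlgebra.single j (C i j)) :
    (∀ x y, P x * P y = P (x * P y) + P (P x * y)) ↔
      ((∃ a b c : k, a ≠ 0 ∧ a + b ≠ 0 ∧ C = mat3 (-a) 0 a b 0 (-b) c 0 (-c)) ∨
      (∃ a c d : k, a ≠ 0 ∧ C = mat3 (-a) 0 a (-a) 0 a c d (-c - d)) ∨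
      (∃ a b : k, a ≠ 0 ∧ C = mat3 0 0 0 (-a) 0 a b 0 (-b)) ∨
      (∃ b c : k, c ≠ 0 ∧ C = mat3 0 0 0 0 0 0 b c (-(b + c))) ∨
      (∃ a b : k, C = mat3 0 0 0 a 0 0 b 0 (-b)) ∨
      (∃ a b c d : k, b ≠ 0 ∧ a + b ≠ 0 ∧ C = mat3 a (-(a + b)) b a (-(a + b)) b c d (-(c + d))) ∨
      (∃ a b c : k, b ≠ 0 ∧ a + b ≠ 0 ∧ C = mat3 a b 0 (-(a ^ 2) / b) (-a) 0 c b (a - c)) ∨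
      (∃ b c d : k, b ≠ 0 ∧ C = mat3 (-b) b 0 (-b) b 0 c d (-c - d))) :=
  (rotaBaxter_iff_matrix mul_eq_mul_e1 hC).trans <|
    (forall_rowSum_smul_iff (funMatrix_mulVec_one _)).trans (inRotaBaxterFamilies_iff C).symm

theorem rbo_NCS4 {k : Type*} [Field k] [CharZero k]
    (P : MonoidAlgebra k S →ₗ[k] MonoidAlgebra k S) (C : S → S → k)
    (hC : ∀ i, P (MonoidAlgebra.single i 1) = ∑ j, MonoidAlgebra.single j (C i j)) :
    (∀ x y, P x * P y = P (x * P y) + P (P x * y)) ↔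
      ((∃ a b c : k, a ≠ 0 ∧ a + b ≠ 0 ∧ C = mat3 (-a) 0 a b 0 (-b) c 0 (-c)) ∨
      (∃ a c d : k, a ≠ 0 ∧ C = mat3 (-a) 0 a (-a) 0 a c d (-c - d)) ∨
      (∃ a b : k, a ≠ 0 ∧ C = mat3 0 0 0 (-a) 0 a b 0 (-b)) ∨
      (∃ b c : k, c ≠ 0 ∧ C = mat3 0 0 0 0 0 0 b c (-(b + c))) ∨
      (∃ a b : k, C = mat3 0 0 0 a 0 0 b 0 (-b)) ∨
      (∃ a b c d : k, b ≠ 0 ∧ a + b ≠ 0 ∧ C = mat3 a (-(a + b)) b a (-(a + b)) b c d (-(c + d))) ∨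
      (∃ a b c : k, b ≠ 0 ∧ a + b ≠ 0 ∧ C = mat3 a b 0 (-(a ^ 2) / b) (-a) 0 c b (a - c)) ∨
      (∃ b c d : k, b ≠ 0 ∧ C = mat3 (-b) b 0 (-b) b 0 c d (-c - d))) :=
  rbo_NCS4_general P C hC

end Stmt17
end
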